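/- Let R be a complete discrete valuation ring with uniformizer π, such that n is a positive integer invertible in R and R contains a primitive n-th root of unity. Let a, b be positive integers with gcd(a, n) = gcd(b, n) = 1, and let r be an integer with gcd(r, n) = 1 and n dividing a + r·b. Let C = R[[z,w]]/(π − z^{a}·w^{b}), and let the group μ_n of n-th roots of unity in R act on C by R-algebra automorphisms via [ξ](z) = ξ·z and [ξ](w) = ξ^{r}·w (this is well defined since n divides a + r·b). Let ψ : B = R[[s,t]]/(π^{n} − s^{a}·t^{b}) → C be the R-algebra homomorphism determined by s ↦ z^{n}, t ↦ w^{n}. Then the subring C^{μ_n} of μ_n-invariant elements of C is generated as a module over ψ(B) by the invariant monomials z^{i}·w^{j} with 0 ≤ i, j < n and n dividing i + r·j. -/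

import Mathlib

/-!
Averaging over `μ_n`: as `n` is invertible and `∑_{k<n} ζ^{mk}` is `n` or `0` according as
`n ∣ m`, the Reynolds operator `f ↦ n⁻¹ ∑_k [ζ^k] f` keeps precisely the monomials `z^i w^j`
of weight `i + r j ≡ 0 (mod n)`, so every invariant of `C` is the image of a series supported
on such monomials. Sorting those monomials by `(i mod n, j mod n)` writes the series as
`∑ z^i w^j · Φ(g_{ij})` over `0 ≤ i, j < n` with `n ∣ i + r j`, where `Φ g = g(z^n, w^n)`.
Conversely the action is multiplicative and fixes both these monomials and the image of `Φ`.
-/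

/-- The ideal `(π^{m} − z^{a}·w^{b})` of `R[[z,w]] = MvPowerSeries (Fin 2) R`
(with `z = X 0`, `w = X 1`). -/
noncomputable abbrev stmt7.I (R : Type) [CommRing R] (π : R) (m a b : ℕ) :
    Ideal (MvPowerSeries (Fin 2) R) :=
  Ideal.span {(MvPowerSeries.C (σ := Fin 2) (R := R) π) ^ m
    - (MvPowerSeries.X (0 : Fin 2)) ^ a * (MvPowerSeries.X (1 : Fin 2)) ^ b}

abbrev stmt7.Q (R : Type) [CommRing R] (π : R) (m a b : ℕ) : Type :=
  MvPowerSeries (Fin 2) R ⧸ stmt7.I R π m a b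

open MvPowerSeries Finsupp Finset

lemma Nat.le_and_dvd_sub_iff_eq_mod_of_lt {n i p : ℕ} (hi : i < n) :
    i ≤ p ∧ n ∣ p - i ↔ i = p % n := by
  constructor
  · rintro ⟨hip, k, hk⟩
    rw [show p = i + n * k by omega, Nat.add_mul_mod_self_left, Nat.mod_eq_of_lt hi]
  · rintro rfl
    exact ⟨Nat.mod_le p n, Nat.dvd_sub_mod p⟩

lemma geom_sum_eq_zero_of_pow_eq_one {R : Type*} [CommRing R] [IsDomain R] {x : R} {n : ℕ}
    (hx : x ^ n = 1) (h1 : x ≠ 1) : ∑ k ∈ range n, x ^ k = 0 := by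
  refine eq_zero_of_ne_zero_of_mul_left_eq_zero (sub_ne_zero_of_ne h1.symm) ?_
  rw [mul_neg_geom_sum, hx, sub_self]

lemma IsPrimitiveRoot.geom_sum_zpow {R : Type*} [CommRing R] [IsDomain R] {u : Rˣ} {n : ℕ}
    (hu : IsPrimitiveRoot u n) (m : ℤ) :
    ∑ k ∈ range n, ((u ^ m : Rˣ) : R) ^ k = if (n : ℤ) ∣ m then (n : R) else 0 := by
  split_ifs with hm
  · simp [(hu.zpow_eq_one_iff_dvd m).2 hm]
  refine geom_sum_eq_zero_of_pow_eq_one ?_ (by rwa [Ne, Units.val_eq_one, hu.zpow_eq_one_iff_dvd])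
  rw [← Units.val_pow_eq_pow_val, ← zpow_natCast, ← zpow_mul, mul_comm, zpow_mul,
    zpow_natCast, hu.pow_eq_one, one_zpow, Units.val_one]

namespace stmt7

lemma fin2_eq_single_add_single (d : Fin 2 →₀ ℕ) : d = single 0 (d 0) + single 1 (d 1) := by
  ext i; fin_cases i <;> simp

lemma single_add_single_le_iff {i j p q : ℕ} :
    single (0 : Fin 2) i + single 1 j ≤ single 0 p + single 1 q ↔ i ≤ p ∧ j ≤ q := by
  refine ⟨fun h => ⟨by simpa using h 0, by simpa using h 1⟩, fun ⟨hi, hj⟩ s => ?_⟩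
  fin_cases s <;> simpa

lemma single_add_single_tsub (i j p q : ℕ) :
    single (0 : Fin 2) p + single 1 q - (single 0 i + single 1 j)
      = single 0 (p - i) + single 1 (q - j) := by
  ext s; fin_cases s <;> simp

variable {R : Type*} [CommRing R]

noncomputable section

def weight (r : ℤ) (d : Fin 2 →₀ ℕ) : ℤ := d 0 + r * d 1

def invariantPart (n : ℕ) (r : ℤ) (f : MvPowerSeries (Fin 2) R) : MvPowerSeries (Fin 2) R :=
  fun d => if (n : ℤ) ∣ weight r d then coeff d f else 0

def residuePart (n i j : ℕ) (g : MvPowerSeries (Fin 2) R) : MvPowerSeries (Fin 2) R :=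
  fun e => coeff (single 0 (n * e 0 + i) + single 1 (n * e 1 + j)) g

def invariants {S : Type*} (act : Rˣ → S → S) (n : ℕ) : Set S :=
  {x | ∀ ξ ∈ rootsOfUnity n R, act ξ x = x}

def invariantMonomials (J : Ideal (MvPowerSeries (Fin 2) R)) (n : ℕ) (r : ℤ) :
    Set (MvPowerSeries (Fin 2) R ⧸ J) :=
  {x | ∃ i j : ℕ, i < n ∧ j < n ∧ (n : ℤ) ∣ i + r * j ∧
    x = Ideal.Quotient.mk J (X 0) ^ i * Ideal.Quotient.mk J (X 1) ^ j}

end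

lemma weight_single_add_single (r : ℤ) (i j : ℕ) :
    weight r (single 0 i + single 1 j) = i + r * j := by
  simp [weight]

@[simp]
lemma coeff_invariantPart (n : ℕ) (r : ℤ) (f : MvPowerSeries (Fin 2) R) (d : Fin 2 →₀ ℕ) :
    coeff d (invariantPart n r f) = if (n : ℤ) ∣ weight r d then coeff d f else 0 := rfl

@[simp]
lemma coeff_residuePart (n i j : ℕ) (g : MvPowerSeries (Fin 2) R) (e : Fin 2 →₀ ℕ) :
    coeff e (residuePart n i j g) = coeff (single 0 (n * e 0 + i) + single 1 (n * e 1 + j)) g :=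
  rfl

lemma residuePart_invariantPart (n i j : ℕ) (r : ℤ) (g : MvPowerSeries (Fin 2) R) :
    residuePart n i j (invariantPart n r g)
      = if (n : ℤ) ∣ i + r * j then residuePart n i j g else 0 := by
  ext e
  have hw : weight r (single 0 (n * e 0 + i) + single 1 (n * e 1 + j))
      = i + r * j + n * (e 0 + r * e 1) := by
    rw [weight_single_add_single]; push_cast; ring
  simp only [coeff_residuePart, coeff_invariantPart, hw, dvd_add_left (dvd_mul_right _ _)]
  split_ifs <;> simp

section Decomposition

variable {n : ℕ} (Φ : MvPowerSeries (Fin 2) R → MvPowerSeries (Fin 2) R)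
  (hΦ : ∀ (f : MvPowerSeries (Fin 2) R) (d : Fin 2 →₀ ℕ),
    coeff d (Φ f) =
      if n ∣ d 0 ∧ n ∣ d 1 then coeff (single 0 (d 0 / n) + single 1 (d 1 / n)) f else 0)
include hΦ

lemma coeff_X_pow_mul_X_pow_mul_residuePart {i j : ℕ} (hi : i < n) (hj : j < n)
    (g : MvPowerSeries (Fin 2) R) (d : Fin 2 →₀ ℕ) :
    coeff d (X 0 ^ i * X 1 ^ j * Φ (residuePart n i j g))
      = if (i, j) = (d 0 % n, d 1 % n) then coeff d g else 0 := by
  obtain ⟨p, q, rfl⟩ : ∃ p q, d = single 0 p + single 1 q :=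
    ⟨_, _, fin2_eq_single_add_single d⟩
  rw [X_pow_eq, X_pow_eq, monomial_mul_monomial, one_mul, coeff_monomial_mul]
  simp only [single_add_single_le_iff, hΦ, single_add_single_tsub, one_mul, ← ite_and,
    coeff_residuePart, Finsupp.add_apply, single_eq_same, single_eq_of_ne (zero_ne_one' (Fin 2)),
    single_eq_of_ne (zero_ne_one' (Fin 2)).symm, add_zero, zero_add]
  have hcond : ((i ≤ p ∧ j ≤ q) ∧ n ∣ p - i ∧ n ∣ q - j) ↔ (i, j) = (p % n, q % n) := by
    rw [Prod.mk.injEq, ← Nat.le_and_dvd_sub_iff_eq_mod_of_lt hi,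
      ← Nat.le_and_dvd_sub_iff_eq_mod_of_lt hj]
    tauto
  by_cases h : (i, j) = (p % n, q % n)
  · obtain ⟨⟨hip, hjq⟩, hdi, hdj⟩ := hcond.2 h
    rw [if_pos (hcond.2 h), if_pos h, Nat.mul_div_cancel' hdi, Nat.mul_div_cancel' hdj,
      Nat.sub_add_cancel hip, Nat.sub_add_cancel hjq]
  · rw [if_neg (mt hcond.1 h), if_neg h]

lemma eq_sum_X_pow_mul_X_pow_mul_residuePart (hn : 0 < n) (g : MvPowerSeries (Fin 2) R) :
    g = ∑ p ∈ range n ×ˢ range n, X 0 ^ p.1 * X 1 ^ p.2 * Φ (residuePart n p.1 p.2 g) := by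
  ext d
  rw [map_sum, sum_congr rfl fun p hp => coeff_X_pow_mul_X_pow_mul_residuePart Φ hΦ
    (mem_range.1 (mem_product.1 hp).1) (mem_range.1 (mem_product.1 hp).2) g d]
  simp only [Prod.mk.eta, Finset.sum_ite_eq', mem_product, mem_range, Nat.mod_lt _ hn, and_self,
    if_true]

lemma dvd_weight_of_coeff_ne_zero (r : ℤ) {g : MvPowerSeries (Fin 2) R} {d : Fin 2 →₀ ℕ}
    (hd : coeff d (Φ g) ≠ 0) : (n : ℤ) ∣ weight r d := by
  rw [hΦ] at hd
  obtain ⟨⟨k, hk⟩, ⟨l, hl⟩⟩ : n ∣ d 0 ∧ n ∣ d 1 := by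
    by_contra h
    exact hd (if_neg h)
  exact ⟨k + r * l, by rw [weight, hk, hl]; push_cast; ring⟩

end Decomposition

section Action

variable {r : ℤ} (act : Rˣ → MvPowerSeries (Fin 2) R → MvPowerSeries (Fin 2) R)
  (hact : ∀ (ξ : Rˣ) (f : MvPowerSeries (Fin 2) R) (d : Fin 2 →₀ ℕ),
    coeff d (act ξ f) = (ξ : R) ^ d 0 * ((ξ ^ r : Rˣ) : R) ^ d 1 * coeff d f)
include hact

lemma coeff_act (ξ : Rˣ) (f : MvPowerSeries (Fin 2) R) (d : Fin 2 →₀ ℕ) :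
    coeff d (act ξ f) = ((ξ ^ weight r d : Rˣ) : R) * coeff d f := by
  rw [hact, weight, zpow_add, zpow_natCast, zpow_mul, zpow_natCast, Units.val_mul,
    Units.val_pow_eq_pow_val, Units.val_pow_eq_pow_val]

lemma act_zero (ξ : Rˣ) : act ξ 0 = 0 := by
  ext d; simp [coeff_act act hact]

lemma act_add (ξ : Rˣ) (f g : MvPowerSeries (Fin 2) R) :
    act ξ (f + g) = act ξ f + act ξ g := by
  ext d; simp [coeff_act act hact, mul_add]

lemma act_mul (ξ : Rˣ) (f g : MvPowerSeries (Fin 2) R) :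
    act ξ (f * g) = act ξ f * act ξ g := by
  ext d
  rw [coeff_act act hact, coeff_mul, coeff_mul, Finset.mul_sum]
  refine sum_congr rfl fun p hp => ?_
  have hw : weight r d = weight r p.1 + weight r p.2 := by
    rw [← mem_antidiagonal.1 hp]; simp only [weight, Finsupp.add_apply]; push_cast; ring
  rw [coeff_act act hact, coeff_act act hact, hw, zpow_add, Units.val_mul]
  ring

lemma act_eq_self_of_weight_dvd {n : ℕ} {ξ : Rˣ} (hξ : ξ ^ n = 1)
    {f : MvPowerSeries (Fin 2) R} (hf : ∀ d, coeff d f ≠ 0 → (n : ℤ) ∣ weight r d) :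
    act ξ f = f := by
  ext d
  rw [coeff_act act hact]
  by_cases hd : coeff d f = 0
  · rw [hd, mul_zero]
  · obtain ⟨k, hk⟩ := hf d hd
    rw [hk, zpow_mul, zpow_natCast, hξ, one_zpow, Units.val_one, one_mul]

lemma sum_act_pow_eq_nsmul_invariantPart [IsDomain R] {n : ℕ} {u : Rˣ} (hu : IsPrimitiveRoot u n)
    (f : MvPowerSeries (Fin 2) R) :
    ∑ k ∈ range n, act (u ^ k) f = n • invariantPart n r f := by
  ext d
  have hterm (k : ℕ) :
      coeff d (act (u ^ k) f) = ((u ^ weight r d : Rˣ) : R) ^ k * coeff d f := by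
    rw [coeff_act act hact, ← Units.val_pow_eq_pow_val, ← zpow_natCast, ← zpow_natCast,
      ← zpow_mul, ← zpow_mul, mul_comm (k : ℤ)]
  simp only [map_sum, hterm, ← Finset.sum_mul, hu.geom_sum_zpow, map_nsmul, coeff_invariantPart]
  split_ifs <;> simp

section Quotient

variable {n : ℕ} {J : Ideal (MvPowerSeries (Fin 2) R)}
  (actC : Rˣ → MvPowerSeries (Fin 2) R ⧸ J → MvPowerSeries (Fin 2) R ⧸ J)
  (hactC : ∀ ξ ∈ rootsOfUnity n R, ∀ f : MvPowerSeries (Fin 2) R,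
    actC ξ (Ideal.Quotient.mk J f) = Ideal.Quotient.mk J (act ξ f))
include hactC

lemma mk_eq_mk_invariantPart [IsDomain R] (hunit : IsUnit (n : R)) {u : Rˣ}
    (hu : IsPrimitiveRoot u n) {f : MvPowerSeries (Fin 2) R}
    (hf : ∀ ξ ∈ rootsOfUnity n R, actC ξ (Ideal.Quotient.mk J f) = Ideal.Quotient.mk J f) :
    Ideal.Quotient.mk J f = Ideal.Quotient.mk J (invariantPart n r f) := by
  have hmem : ∀ k : ℕ, u ^ k ∈ rootsOfUnity n R :=
    fun k => pow_mem ((mem_rootsOfUnity n u).2 hu.pow_eq_one) k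
  have hunitJ : IsUnit (n : MvPowerSeries (Fin 2) R ⧸ J) := by
    simpa using hunit.map (algebraMap R (MvPowerSeries (Fin 2) R ⧸ J))
  refine hunitJ.mul_left_cancel ?_
  simp only [← nsmul_eq_mul]
  calc n • Ideal.Quotient.mk J f = ∑ k ∈ range n, Ideal.Quotient.mk J (act (u ^ k) f) := by
        rw [sum_congr rfl fun k _ => (hactC _ (hmem k) f).symm.trans (hf _ (hmem k)), sum_const,
          card_range]
    _ = n • Ideal.Quotient.mk J (invariantPart n r f) := by
        rw [← map_sum, sum_act_pow_eq_nsmul_invariantPart act hact hu, map_nsmul]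

variable {I : Ideal (MvPowerSeries (Fin 2) R)}
  (Φ : MvPowerSeries (Fin 2) R → MvPowerSeries (Fin 2) R)
  (hΦ : ∀ (f : MvPowerSeries (Fin 2) R) (d : Fin 2 →₀ ℕ),
    coeff d (Φ f) =
      if n ∣ d 0 ∧ n ∣ d 1 then coeff (single 0 (d 0 / n) + single 1 (d 1 / n)) f else 0)
  (ψ : MvPowerSeries (Fin 2) R ⧸ I →+* MvPowerSeries (Fin 2) R ⧸ J)
  (hψ : ∀ f : MvPowerSeries (Fin 2) R,
    ψ (Ideal.Quotient.mk I f) = Ideal.Quotient.mk J (Φ f))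
include hΦ hψ

theorem invariants_subset_span [IsDomain R] (hn : 0 < n) (hunit : IsUnit (n : R)) {u : Rˣ}
    (hu : IsPrimitiveRoot u n) :
    letI := ψ.toAlgebra
    invariants actC n ⊆
      Submodule.span (MvPowerSeries (Fin 2) R ⧸ I) (invariantMonomials J n r) := by
  let _ := ψ.toAlgebra
  intro x hx
  obtain ⟨f, rfl⟩ := Ideal.Quotient.mk_surjective x
  rw [SetLike.mem_coe, mk_eq_mk_invariantPart act hact actC hactC hunit hu hx,
    eq_sum_X_pow_mul_X_pow_mul_residuePart Φ hΦ hn (invariantPart n r f), map_sum]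
  refine Submodule.sum_mem _ fun p hp => ?_
  obtain ⟨hp1, hp2⟩ := mem_product.1 hp
  rw [map_mul, ← hψ, residuePart_invariantPart]
  split_ifs with hdvd
  · rw [mul_comm, ← RingHom.algebraMap_toAlgebra ψ, ← Algebra.smul_def]
    exact Submodule.smul_mem _ _ (Submodule.subset_span
      ⟨p.1, p.2, mem_range.1 hp1, mem_range.1 hp2, hdvd, by simp only [map_mul, map_pow]⟩)
  · rw [map_zero, map_zero, mul_zero]
    exact zero_mem _

theorem span_subset_invariants :
    letI := ψ.toAlgebra
    ↑(Submodule.span (MvPowerSeries (Fin 2) R ⧸ I) (invariantMonomials J n r))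
      ⊆ invariants actC n := by
  let _ := ψ.toAlgebra
  intro x hx ξ hξ
  have hξn : ξ ^ n = 1 := (mem_rootsOfUnity n ξ).1 hξ
  have hfix : ∀ f, act ξ f = f → actC ξ (Ideal.Quotient.mk J f) = Ideal.Quotient.mk J f :=
    fun f hf => by rw [hactC ξ hξ, hf]
  induction hx using Submodule.span_induction with
  | mem y hy =>
    obtain ⟨i, j, -, -, hij, rfl⟩ := hy
    rw [← map_pow, ← map_pow, ← map_mul]
    refine hfix _ (act_eq_self_of_weight_dvd act hact hξn fun d hd => ?_)
    rw [X_pow_eq, X_pow_eq, monomial_mul_monomial, coeff_monomial] at hd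
    obtain rfl : d = single 0 i + single 1 j := by
      by_contra h
      exact hd (if_neg h)
    rwa [weight_single_add_single]
  | zero => rw [← map_zero (Ideal.Quotient.mk J), hfix _ (act_zero act hact ξ)]
  | add y z _ _ hy hz =>
    obtain ⟨f, rfl⟩ := Ideal.Quotient.mk_surjective y
    obtain ⟨g, rfl⟩ := Ideal.Quotient.mk_surjective z
    rw [← map_add, hactC ξ hξ, act_add act hact, map_add, ← hactC ξ hξ, ← hactC ξ hξ, hy, hz,
      map_add]
  | smul c y _ hy =>
    obtain ⟨c, rfl⟩ := Ideal.Quotient.mk_surjective c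
    obtain ⟨f, rfl⟩ := Ideal.Quotient.mk_surjective y
    have hΦc : act ξ (Φ c) = Φ c :=
      act_eq_self_of_weight_dvd act hact hξn fun d hd => dvd_weight_of_coeff_ne_zero Φ hΦ r hd
    rw [Algebra.smul_def, RingHom.algebraMap_toAlgebra, hψ, ← map_mul, hactC ξ hξ,
      act_mul act hact, hΦc, map_mul, ← hactC ξ hξ, hy, map_mul]

end Quotient

end Action

end stmt7

theorem stmt_7_general
    (R : Type) [CommRing R] [IsDomain R] (π : R)
    (n : ℕ) (hn : 0 < n) (hunit : IsUnit (n : R))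
    (hroot : ∃ ζ : R, IsPrimitiveRoot ζ n)
    (a b : ℕ)
    (r : ℤ)
    (act : Rˣ → MvPowerSeries (Fin 2) R → MvPowerSeries (Fin 2) R)
    (hact : ∀ (ξ : Rˣ) (f : MvPowerSeries (Fin 2) R) (d : Fin 2 →₀ ℕ),
      MvPowerSeries.coeff d (act ξ f)
        = ((ξ : R) ^ (d 0)) * (((ξ ^ r : Rˣ) : R) ^ (d 1)) * MvPowerSeries.coeff d f)
    (actC : Rˣ → stmt7.Q R π 1 a b → stmt7.Q R π 1 a b)
    (hactC : ∀ ξ ∈ rootsOfUnity n R, ∀ f : MvPowerSeries (Fin 2) R,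
      actC ξ (Ideal.Quotient.mk (stmt7.I R π 1 a b) f)
        = Ideal.Quotient.mk (stmt7.I R π 1 a b) (act ξ f))
    (Φ : MvPowerSeries (Fin 2) R →ₐ[R] MvPowerSeries (Fin 2) R)
    (hΦ : ∀ (f : MvPowerSeries (Fin 2) R) (d : Fin 2 →₀ ℕ),
      MvPowerSeries.coeff d (Φ f) =
        if n ∣ d 0 ∧ n ∣ d 1 then
          MvPowerSeries.coeff
            (Finsupp.single 0 (d 0 / n) + Finsupp.single 1 (d 1 / n)) f
        else 0)
    (ψ : stmt7.Q R π n a b →+* stmt7.Q R π 1 a b)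
    (hψ : ∀ f : MvPowerSeries (Fin 2) R,
      ψ (Ideal.Quotient.mk (stmt7.I R π n a b) f)
        = Ideal.Quotient.mk (stmt7.I R π 1 a b) (Φ f)) :
    letI : Algebra (stmt7.Q R π n a b) (stmt7.Q R π 1 a b) := ψ.toAlgebra
    {x : stmt7.Q R π 1 a b | ∀ ξ ∈ rootsOfUnity n R, actC ξ x = x}
      = ↑(Submodule.span (stmt7.Q R π n a b)
          {x : stmt7.Q R π 1 a b | ∃ i j : ℕ, i < n ∧ j < n ∧
            (n : ℤ) ∣ (i : ℤ) + r * (j : ℤ) ∧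
            x = (Ideal.Quotient.mk (stmt7.I R π 1 a b) (MvPowerSeries.X (0 : Fin 2))) ^ i
              * (Ideal.Quotient.mk (stmt7.I R π 1 a b) (MvPowerSeries.X (1 : Fin 2))) ^ j}) := by
  obtain ⟨ζ, hζ⟩ := hroot
  exact Set.Subset.antisymm
    (stmt7.invariants_subset_span act hact actC hactC Φ hΦ ψ hψ hn hunit
      (hζ.isUnit_unit hn.ne'))
    (stmt7.span_subset_invariants act hact actC hactC Φ hΦ ψ hψ)

/-- Let `R` be a complete discrete valuation ring with uniformizer `π`,
such that `n` is a positive integer invertible in `R` and `R` contains a primitive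
`n`-th root of unity.  Let `a, b` be positive integers with `gcd(a,n) = gcd(b,n) = 1`,
and let `r` be an integer with `gcd(r,n) = 1` and `n ∣ a + r·b`.  Let
`C = R[[z,w]]/(π − z^a·w^b)`, and let the group `μ_n` of `n`-th roots of unity in `R`
act on `C` by `R`-algebra automorphisms via `[ξ](z) = ξ·z` and `[ξ](w) = ξ^r·w`
(encoded by the coefficient characterization `hact` on the power series ring and the
compatibility `hactC` with the quotient map).  Let
`ψ : B = R[[s,t]]/(π^n − s^a·t^b) → C` be the `R`-algebra homomorphism determined by
`s ↦ z^n`, `t ↦ w^n` (encoded by the coefficient characterization of the underlying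
substitution `Φ` and compatibility with the quotient maps).  Then the subring `C^{μ_n}`
of `μ_n`-invariant elements of `C` is generated as a module over `ψ(B)` by the invariant
monomials `z^i·w^j` with `0 ≤ i, j < n` and `n ∣ i + r·j`. -/
theorem stmt_7
    (R : Type) [CommRing R] [IsDomain R] [IsDiscreteValuationRing R]
    [IsAdicComplete (IsLocalRing.maximalIdeal R) R]
    (π : R) (hπ : Irreducible π)
    (n : ℕ) (hn : 0 < n) (hunit : IsUnit (n : R))
    (hroot : ∃ ζ : R, IsPrimitiveRoot ζ n)
    (a b : ℕ) (ha : 0 < a) (hb : 0 < b)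
    (han : Nat.gcd a n = 1) (hbn : Nat.gcd b n = 1)
    (r : ℤ) (hrn : Int.gcd r n = 1) (hdvd : (n : ℤ) ∣ (a : ℤ) + r * (b : ℤ))
    (act : Rˣ → MvPowerSeries (Fin 2) R → MvPowerSeries (Fin 2) R)
    (hact : ∀ (ξ : Rˣ) (f : MvPowerSeries (Fin 2) R) (d : Fin 2 →₀ ℕ),
      MvPowerSeries.coeff d (act ξ f)
        = ((ξ : R) ^ (d 0)) * (((ξ ^ r : Rˣ) : R) ^ (d 1)) * MvPowerSeries.coeff d f)
    (actC : Rˣ → stmt7.Q R π 1 a b → stmt7.Q R π 1 a b)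
    (hactC : ∀ ξ ∈ rootsOfUnity n R, ∀ f : MvPowerSeries (Fin 2) R,
      actC ξ (Ideal.Quotient.mk (stmt7.I R π 1 a b) f)
        = Ideal.Quotient.mk (stmt7.I R π 1 a b) (act ξ f))
    (Φ : MvPowerSeries (Fin 2) R →ₐ[R] MvPowerSeries (Fin 2) R)
    (hΦ : ∀ (f : MvPowerSeries (Fin 2) R) (d : Fin 2 →₀ ℕ),
      MvPowerSeries.coeff d (Φ f) =
        if n ∣ d 0 ∧ n ∣ d 1 then
          MvPowerSeries.coeff
            (Finsupp.single 0 (d 0 / n) + Finsupp.single 1 (d 1 / n)) f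
        else 0)
    (ψ : stmt7.Q R π n a b →+* stmt7.Q R π 1 a b)
    (hψ : ∀ f : MvPowerSeries (Fin 2) R,
      ψ (Ideal.Quotient.mk (stmt7.I R π n a b) f)
        = Ideal.Quotient.mk (stmt7.I R π 1 a b) (Φ f)) :
    letI : Algebra (stmt7.Q R π n a b) (stmt7.Q R π 1 a b) := ψ.toAlgebra
    {x : stmt7.Q R π 1 a b | ∀ ξ ∈ rootsOfUnity n R, actC ξ x = x}
      = ↑(Submodule.span (stmt7.Q R π n a b)
          {x : stmt7.Q R π 1 a b | ∃ i j : ℕ, i < n ∧ j < n ∧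
            (n : ℤ) ∣ (i : ℤ) + r * (j : ℤ) ∧
            x = (Ideal.Quotient.mk (stmt7.I R π 1 a b) (MvPowerSeries.X (0 : Fin 2))) ^ i
              * (Ideal.Quotient.mk (stmt7.I R π 1 a b) (MvPowerSeries.X (1 : Fin 2))) ^ j}) :=
  stmt_7_general R π n hn hunit hroot a b r act hact actC hactC Φ hΦ ψ hψ
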